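/- arXiv:2511.05352 — 2 statements merged into one kernel-verified Lean document; each statement's English description precedes it below -/
import Mathlib

section
/- Suppose the entries x_i of X are independent Poisson random variables with respective rates m_i (the PCP model). Then the expected Fisher information matrix I(θ) = E[−∇²_θ ℓ(X|θ)] has entries: for k = l, E[−∂²ℓ/∂A_k(i,r)∂A_k(j,s)] = [i = j] · Σ_{i' : i'_k = i} (1/m_{i'}) ∏_{q≠k} A_q(i'_q,r) A_q(i'_q,s); and for k ≠ l, E[−∂²ℓ/∂A_k(i,r)∂A_l(j,s)] = A_k(i,s) A_l(j,r) Σ_{i' : i'_k = i, i'_l = j} (1/m_{i'}) ∏_{q≠k,l} A_q(i'_q,r) A_q(i'_q,s), where products over the empty set equal 1; in particular the terms present in the observed information that involve x_{i'}/m_{i'} − 1 have expectation zero. -/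
/-! Each `m_{i'}` is affine in any single entry `A_k(i,r)`, with slope
`∂m_{i'}/∂A_k(i,r) = [i'_k = i] ∏_{q≠k} A_q(i'_q,r)`. Hence, writing `∂ = ∂/∂A_k(i,r)` and
`∂' = ∂/∂A_l(j,s)`, the quantity
`−∂∂'ℓ = Σ_{i'} [x_{i'} ∂m_{i'} ∂'m_{i'} / m_{i'}² − (x_{i'}/m_{i'} − 1) ∂∂'m_{i'}]` is affine in the
counts. The expectation is a series over all count tensors of a product of Poisson weights, so it
factorises over the multi-indices and gives `E x_{i'} = m_{i'}`; the second term therefore has mean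
zero and the first has mean `Σ_{i'} ∂m_{i'} ∂'m_{i'} / m_{i'}`. Both formulas are this sum written
out for `k = l` and for `k ≠ l`. -/

open Finset

noncomputable section

variable {P R : ℕ} {N : Fin P → ℕ}

/-- Entry `m_i = Σ_r ∏_p A_p(i_p, r)` of the CP parameter tensor. -/
def mTen (A : (p : Fin P) → Fin (N p) → Fin R → ℝ) (i : (p : Fin P) → Fin (N p)) : ℝ :=
  ∑ r, ∏ p, A p (i p) r

/-- PCP loglikelihood `ℓ(X|θ) = Σ_i [ x_i log m_i − m_i − log(x_i!) ]`. -/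
def llik (A : (p : Fin P) → Fin (N p) → Fin R → ℝ)
    (X : ((p : Fin P) → Fin (N p)) → ℕ) : ℝ :=
  ∑ i : (p : Fin P) → Fin (N p),
    ((X i : ℝ) * Real.log (mTen A i) - mTen A i - Real.log (Nat.factorial (X i) : ℝ))

/-- The collection of factor matrices with the single entry `A_k(i,r)` replaced by `t`. -/
def updEntry (A : (q : Fin P) → Fin (N q) → Fin R → ℝ) (k : Fin P) (i : Fin (N k)) (r : Fin R)
    (t : ℝ) : (q : Fin P) → Fin (N q) → Fin R → ℝ :=
  Function.update A k (Function.update (A k) i (Function.update (A k i) r t))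

/-- Partial derivative of a function of the factor matrices in the single entry
`A_k(i,r)`, i.e. the derivative of the real function obtained by varying that entry
with all other entries fixed, evaluated at the current entry value. -/
def pd (f : ((q : Fin P) → Fin (N q) → Fin R → ℝ) → ℝ) (k : Fin P) (i : Fin (N k)) (r : Fin R)
    (A : (q : Fin P) → Fin (N q) → Fin R → ℝ) : ℝ :=
  deriv (fun t => f (updEntry A k i r t)) (A k i r)

/-- Probability of the count tensor `X` under the PCP model: the product over all
multi-indices of the Poisson probabilities `e^{-m_i} m_i^{x_i} / x_i!` (the entries of
`X` are independent Poisson with rates `m_i`). -/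
def pmfProd (A : (p : Fin P) → Fin (N p) → Fin R → ℝ)
    (X : ((p : Fin P) → Fin (N p)) → ℕ) : ℝ :=
  ∏ i : (p : Fin P) → Fin (N p),
    Real.exp (-(mTen A i)) * mTen A i ^ X i / (Nat.factorial (X i) : ℝ)

theorem hasSum_fin_prod_apply {κ : Type*} {n : ℕ} {f : Fin n → κ → ℝ} {a : Fin n → ℝ}
    (hf : ∀ i, HasSum (f i) (a i)) : HasSum (fun x : Fin n → κ => ∏ i, f i (x i)) (∏ i, a i) := by
  induction n with
  | zero => simp
  | succ n ih =>
    have h0 := hf 0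
    have hsucc : HasSum (fun x : Fin n → κ => ∏ i : Fin n, f i.succ (x i)) (∏ i : Fin n, a i.succ) :=
      ih fun i => hf i.succ
    have hprod := h0.mul hsucc <| summable_mul_of_summable_norm (f := f 0)
      (g := fun x : Fin n → κ => ∏ i : Fin n, f i.succ (x i))
      (summable_norm_iff.2 h0.summable) (summable_norm_iff.2 hsucc.summable)
    rw [Fin.prod_univ_succ, ← (Fin.consEquiv fun _ => κ).hasSum_iff]
    exact hprod.congr_fun fun x => by simp [Fin.prod_univ_succ, Fin.consEquiv]

theorem hasSum_pi_prod_apply {ι κ : Type*} [Fintype ι] {f : ι → κ → ℝ} {a : ι → ℝ}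
    (hf : ∀ i, HasSum (f i) (a i)) : HasSum (fun x : ι → κ => ∏ i, f i (x i)) (∏ i, a i) := by
  let e := (Fintype.equivFin ι).symm
  have h := hasSum_fin_prod_apply (f := fun i => f (e i)) (a := fun i => a (e i)) fun i => hf (e i)
  rw [← e.prod_comp]
  refine (e.arrowCongr (Equiv.refl κ)).hasSum_iff.1 (h.congr_fun fun x => ?_)
  simp [← e.prod_comp]

def poissonWeight (μ : ℝ) (n : ℕ) : ℝ :=
  Real.exp (-μ) * μ ^ n / n.factorial

theorem hasSum_poissonWeight (μ : ℝ) : HasSum (poissonWeight μ) 1 := by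
  have := (NormedSpace.expSeries_div_hasSum_exp μ).mul_left (Real.exp (-μ))
  rw [← Real.exp_eq_exp_ℝ, ← Real.exp_add, neg_add_cancel, Real.exp_zero] at this
  exact this.congr_fun fun n => mul_div_assoc _ _ _

theorem poissonWeight_succ_mul (μ : ℝ) (n : ℕ) :
    poissonWeight μ (n + 1) * ((n : ℝ) + 1) = μ * poissonWeight μ n := by
  simp only [poissonWeight, Nat.factorial_succ]
  push_cast
  field_simp
  ring

theorem hasSum_poissonWeight_mul_natCast (μ : ℝ) :
    HasSum (fun n => poissonWeight μ n * n) μ := by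
  refine (hasSum_nat_add_iff' 1).1 ?_
  simpa [poissonWeight_succ_mul] using (hasSum_poissonWeight μ).mul_left μ

theorem hasSum_prod_poissonWeight_mul_sum {ι : Type*} [Fintype ι] (μ a b : ι → ℝ) :
    HasSum (fun x : ι → ℕ => (∏ i, poissonWeight (μ i) (x i)) * ∑ i, (a i * x i + b i))
      (∑ i, (a i * μ i + b i)) := by
  classical
  have hmass : HasSum (fun x : ι → ℕ => ∏ i, poissonWeight (μ i) (x i)) 1 := by
    simpa using hasSum_pi_prod_apply fun i => hasSum_poissonWeight (μ i)
  have hmean (j : ι) :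
      HasSum (fun x : ι → ℕ => (∏ i, poissonWeight (μ i) (x i)) * x j) (μ j) := by
    have := hasSum_pi_prod_apply
      (f := fun i n => poissonWeight (μ i) n * if i = j then (n : ℝ) else 1)
      (a := fun i => if i = j then μ i else 1) fun i => by
        split_ifs with h
        · exact hasSum_poissonWeight_mul_natCast _
        · simpa using hasSum_poissonWeight _
    simpa only [prod_mul_distrib, Fintype.prod_ite_eq'] using this
  simp_rw [mul_sum]
  refine hasSum_sum fun i _ => ?_
  have := ((hmean i).mul_left (a i)).add (hmass.mul_left (b i))
  rw [mul_one] at this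
  exact this.congr_fun fun x => by ring

theorem hasDerivAt_affine (a b t₀ : ℝ) : HasDerivAt (fun t => a + (t - t₀) * b) b t₀ := by
  simpa using ((hasDerivAt_id t₀).sub_const t₀).mul_const b |>.const_add a

theorem hasDerivAt_mul_log_affine_sub (x c d y t₀ : ℝ) (hc : c ≠ 0) :
    HasDerivAt (fun t => x * Real.log (c + (t - t₀) * d) - (c + (t - t₀) * d) - y)
      ((x / c - 1) * d) t₀ := by
  have hlog := (hasDerivAt_affine c d t₀).log (by simpa using hc)
  refine (hlog.const_mul x |>.sub (hasDerivAt_affine c d t₀) |>.sub_const y).congr_deriv ?_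
  simp only [sub_self, zero_mul, add_zero]
  ring

theorem hasDerivAt_div_affine_sub_one_mul_affine (x c d e g t₀ : ℝ) (hc : c ≠ 0) :
    HasDerivAt (fun t => (x / (c + (t - t₀) * d) - 1) * (e + (t - t₀) * g))
      ((x / c - 1) * g - x * d * e / c ^ 2) t₀ := by
  have hdiv := (hasDerivAt_const t₀ x).fun_div (hasDerivAt_affine c d t₀) (by simpa using hc)
  refine (hdiv.sub_const 1 |>.fun_mul (hasDerivAt_affine e g t₀)).congr_deriv ?_
  simp only [sub_self, zero_mul, add_zero]
  field_simp
  ring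

/-- `mTenDeriv A k i r i'` and `mTenDeriv₂ A k i r l j s i'` are `∂m_{i'}/∂A_k(i,r)` and
`∂²m_{i'}/∂A_k(i,r)∂A_l(j,s)`; the latter vanishes for `k = l` because `m` is linear in each
factor matrix. -/
def mTenDeriv (A : (p : Fin P) → Fin (N p) → Fin R → ℝ) (k : Fin P) (i : Fin (N k)) (r : Fin R)
    (i' : (p : Fin P) → Fin (N p)) : ℝ :=
  if i' k = i then ∏ q ∈ univ.erase k, A q (i' q) r else 0

def mTenDeriv₂ (A : (p : Fin P) → Fin (N p) → Fin R → ℝ) (k : Fin P) (i : Fin (N k)) (r : Fin R)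
    (l : Fin P) (j : Fin (N l)) (s : Fin R) (i' : (p : Fin P) → Fin (N p)) : ℝ :=
  if k = l then 0
  else if i' k = i ∧ i' l = j ∧ r = s then ∏ q ∈ (univ.erase k).erase l, A q (i' q) r else 0

section
variable (A : (p : Fin P) → Fin (N p) → Fin R → ℝ) (k : Fin P) (i : Fin (N k)) (r : Fin R)

theorem updEntry_self : updEntry A k i r (A k i r) = A := by
  simp [updEntry]

theorem updEntry_of_ne {q : Fin P} (hq : q ≠ k) (t : ℝ) : updEntry A k i r t q = A q :=
  Function.update_of_ne hq _ _

theorem updEntry_self_apply (t : ℝ) (j : Fin (N k)) (s : Fin R) :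
    updEntry A k i r t k j s = if j = i ∧ s = r then t else A k j s := by
  by_cases hj : j = i
  · subst hj
    by_cases hs : s = r <;> simp [updEntry, hs]
  · simp [updEntry, hj]

theorem prod_updEntry (t : ℝ) (i' : (p : Fin P) → Fin (N p)) (r' : Fin R) :
    ∏ p, updEntry A k i r t p (i' p) r' =
      (if i' k = i ∧ r' = r then t else A k (i' k) r') * ∏ q ∈ univ.erase k, A q (i' q) r' := by
  rw [← mul_prod_erase univ _ (mem_univ k), updEntry_self_apply]
  congr 1
  exact prod_congr rfl fun q hq => by rw [updEntry_of_ne A k i r (ne_of_mem_erase hq)]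

theorem mTen_updEntry (t : ℝ) (i' : (p : Fin P) → Fin (N p)) :
    mTen (updEntry A k i r t) i' = mTen A i' + (t - A k i r) * mTenDeriv A k i r i' := by
  have hA (r' : Fin R) := prod_updEntry A k i r (A k i r) i' r'
  rw [updEntry_self] at hA
  simp only [mTen, prod_updEntry, hA, mTenDeriv]
  by_cases hi : i' k = i
  · simp only [hi, true_and]
    rw [← sub_eq_iff_eq_add', ← sum_sub_distrib,
      Fintype.sum_eq_single r fun x hx => by simp [hx]]
    simp only [if_true, sub_mul]
  · simp [hi]

theorem mTenDeriv_updEntry (t : ℝ) (l : Fin P) (j : Fin (N l)) (s : Fin R)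
    (i' : (p : Fin P) → Fin (N p)) :
    mTenDeriv (updEntry A k i r t) l j s i' =
      mTenDeriv A l j s i' + (t - A k i r) * mTenDeriv₂ A k i r l j s i' := by
  unfold mTenDeriv mTenDeriv₂
  by_cases hkl : k = l
  · subst hkl
    simp only [if_true, mul_zero, add_zero]
    exact if_congr Iff.rfl (prod_congr rfl fun q hq => by
      rw [updEntry_of_ne A k i r (ne_of_mem_erase hq)]) rfl
  · have hk : k ∈ univ.erase l := mem_erase.2 ⟨hkl, mem_univ k⟩
    by_cases hj : i' l = j
    · simp only [hkl, hj, if_true, if_false, true_and, ← mul_prod_erase _ _ hk,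
        updEntry_self_apply, erase_right_comm (s := univ) (a := k)]
      rw [prod_congr rfl fun q hq => by rw [updEntry_of_ne A k i r (ne_of_mem_erase hq)]]
      by_cases hir : i' k = i ∧ s = r
      · obtain ⟨hi, rfl⟩ := hir
        simp only [hi, and_self, if_true]
        ring
      · have hir' : ¬(i' k = i ∧ r = s) := fun h => hir ⟨h.1, h.2.symm⟩
        simp only [hir, hir', if_false, mul_zero, add_zero]
    · simp [hkl, hj]

theorem pd_llik (hm : ∀ i', mTen A i' ≠ 0) (X : ((p : Fin P) → Fin (N p)) → ℕ) (l : Fin P)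
    (j : Fin (N l)) (s : Fin R) :
    pd (fun A' => llik A' X) l j s A = ∑ i', ((X i' : ℝ) / mTen A i' - 1) * mTenDeriv A l j s i' := by
  simp only [pd, llik, mTen_updEntry]
  exact (HasDerivAt.fun_sum fun i' _ => hasDerivAt_mul_log_affine_sub _ _ _ _ _ (hm i')).deriv

theorem eventually_mTen_updEntry_ne_zero (hm : ∀ i', mTen A i' ≠ 0) :
    ∀ᶠ t in nhds (A k i r), ∀ i', mTen (updEntry A k i r t) i' ≠ 0 := by
  refine Filter.eventually_all.2 fun i' => ?_
  simp only [mTen_updEntry]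
  exact ContinuousAt.eventually_ne (by fun_prop) (by simpa using hm i')

theorem neg_pd_pd_llik (hm : ∀ i', mTen A i' ≠ 0) (X : ((p : Fin P) → Fin (N p)) → ℕ)
    (l : Fin P) (j : Fin (N l)) (s : Fin R) :
    -pd (fun A' => pd (fun A'' => llik A'' X) l j s A') k i r A =
      ∑ i', ((mTenDeriv A k i r i' * mTenDeriv A l j s i' / mTen A i' ^ 2
          - mTenDeriv₂ A k i r l j s i' / mTen A i') * X i' + mTenDeriv₂ A k i r l j s i') := by
  rw [pd, Filter.EventuallyEq.deriv_eq ((eventually_mTen_updEntry_ne_zero A k i r hm).mono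
    fun t ht => pd_llik _ ht X l j s)]
  simp only [mTen_updEntry, mTenDeriv_updEntry]
  rw [(HasDerivAt.fun_sum fun i' _ =>
    hasDerivAt_div_affine_sub_one_mul_affine _ _ _ _ _ _ (hm i')).deriv, ← sum_neg_distrib]
  refine sum_congr rfl fun i' _ => ?_
  field_simp [hm i']
  ring

theorem pmfProd_eq_prod_poissonWeight (X : ((p : Fin P) → Fin (N p)) → ℕ) :
    pmfProd A X = ∏ i', poissonWeight (mTen A i') (X i') :=
  rfl

theorem tsum_pmfProd_mul_neg_pd_pd_llik (hm : ∀ i', mTen A i' ≠ 0) (l : Fin P) (j : Fin (N l))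
    (s : Fin R) :
    ∑' X, pmfProd A X * -pd (fun A' => pd (fun A'' => llik A'' X) l j s A') k i r A =
      ∑ i', mTenDeriv A k i r i' * mTenDeriv A l j s i' / mTen A i' := by
  simp_rw [neg_pd_pd_llik A k i r hm, pmfProd_eq_prod_poissonWeight]
  rw [(hasSum_prod_poissonWeight_mul_sum _ _ _).tsum_eq]
  refine sum_congr rfl fun i' _ => ?_
  field_simp [hm i']
  ring

end

theorem sum_mTenDeriv_mul_mTenDeriv_div_mTen_self (A : (p : Fin P) → Fin (N p) → Fin R → ℝ)
    (k : Fin P) (i j : Fin (N k)) (r s : Fin R) :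
    ∑ i', mTenDeriv A k i r i' * mTenDeriv A k j s i' / mTen A i' =
      if i = j then
        ∑ i' ∈ univ.filter (fun i' : (q : Fin P) → Fin (N q) => i' k = i),
          1 / mTen A i' * ∏ q ∈ univ.erase k, A q (i' q) r * A q (i' q) s
      else 0 := by
  unfold mTenDeriv
  split_ifs with hij
  · subst hij
    rw [sum_filter]
    refine sum_congr rfl fun i' _ => ?_
    split_ifs
    · rw [prod_mul_distrib]
      ring
    · simp
  · refine sum_eq_zero fun i' _ => ?_
    split_ifs with hi hj
    · exact absurd (hi.symm.trans hj) hij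
    all_goals simp

theorem sum_mTenDeriv_mul_mTenDeriv_div_mTen_of_ne (A : (p : Fin P) → Fin (N p) → Fin R → ℝ)
    {k l : Fin P} (hkl : k ≠ l) (i : Fin (N k)) (j : Fin (N l)) (r s : Fin R) :
    ∑ i', mTenDeriv A k i r i' * mTenDeriv A l j s i' / mTen A i' =
      A k i s * A l j r *
        ∑ i' ∈ univ.filter (fun i' : (q : Fin P) → Fin (N q) => i' k = i ∧ i' l = j),
          1 / mTen A i' * ∏ q ∈ (univ.erase k).erase l, A q (i' q) r * A q (i' q) s := by
  rw [mul_sum, sum_filter]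
  refine sum_congr rfl fun i' _ => ?_
  unfold mTenDeriv
  by_cases hi : i' k = i
  · by_cases hj : i' l = j
    · simp only [hi, hj, and_self, if_true]
      rw [← mul_prod_erase (univ.erase k) (fun q => A q (i' q) r)
          (mem_erase.2 ⟨hkl.symm, mem_univ l⟩),
        ← mul_prod_erase (univ.erase l) (fun q => A q (i' q) s)
          (mem_erase.2 ⟨hkl, mem_univ k⟩),
        erase_right_comm, prod_mul_distrib, hi, hj]
      ring
    · simp [hj]
  · simp [hi]

theorem stmt_10_general (P R : ℕ) (hR : 1 ≤ R) (N : Fin P → ℕ)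
    (A : (p : Fin P) → Fin (N p) → Fin R → ℝ) (hA : ∀ p j r, 0 < A p j r) :
    (∀ (k : Fin P) (i j : Fin (N k)) (r s : Fin R),
      ∑' X : ((p : Fin P) → Fin (N p)) → ℕ,
          pmfProd A X * -(pd (fun A' => pd (fun A'' => llik A'' X) k j s A') k i r A) =
        (if i = j then
          ∑ i' ∈ Finset.univ.filter (fun i' : (q : Fin P) → Fin (N q) => i' k = i),
            (1 / mTen A i') * ∏ q ∈ Finset.univ.erase k, A q (i' q) r * A q (i' q) s
        else 0)) ∧
    (∀ (k l : Fin P), k ≠ l → ∀ (i : Fin (N k)) (j : Fin (N l)) (r s : Fin R),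
      ∑' X : ((p : Fin P) → Fin (N p)) → ℕ,
          pmfProd A X * -(pd (fun A' => pd (fun A'' => llik A'' X) l j s A') k i r A) =
        A k i s * A l j r *
          ∑ i' ∈ Finset.univ.filter
              (fun i' : (q : Fin P) → Fin (N q) => i' k = i ∧ i' l = j),
            (1 / mTen A i') *
              ∏ q ∈ (Finset.univ.erase k).erase l, A q (i' q) r * A q (i' q) s) := by
  have : Nonempty (Fin R) := ⟨⟨0, hR⟩⟩
  have hm (i' : (p : Fin P) → Fin (N p)) : mTen A i' ≠ 0 :=
    (sum_pos (fun r _ => prod_pos fun p _ => hA _ _ _) univ_nonempty).ne'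
  refine ⟨fun k i j r s => ?_, fun k l hkl i j r s => ?_⟩
  · rw [tsum_pmfProd_mul_neg_pd_pd_llik A k i r hm,
      sum_mTenDeriv_mul_mTenDeriv_div_mTen_self]
  · rw [tsum_pmfProd_mul_neg_pd_pd_llik A k i r hm,
      sum_mTenDeriv_mul_mTenDeriv_div_mTen_of_ne A hkl]

/-- **Expected Fisher information of the PCP model.** When the entries of `X` are
independent Poisson with rates `m_i`, the expectation (a sum over all count tensors
weighted by their PCP probability) of the negative second partial derivatives of `ℓ`
equals: for `k = l`, `[i = j] · Σ_{i' : i'_k = i} (1/m_{i'}) ∏_{q≠k} A_q(i'_q,r) A_q(i'_q,s)`;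
and for `k ≠ l`, `A_k(i,s) A_l(j,r) Σ_{i' : i'_k=i, i'_l=j} (1/m_{i'})
∏_{q≠k,l} A_q(i'_q,r) A_q(i'_q,s)` (products over the empty set equal `1`); the terms of
the observed information involving `x_{i'}/m_{i'} − 1` have expectation zero. -/
theorem stmt_10 (P R : ℕ) (hP : 2 ≤ P) (hR : 1 ≤ R) (N : Fin P → ℕ) (hN : ∀ p, 1 ≤ N p)
    (A : (p : Fin P) → Fin (N p) → Fin R → ℝ) (hA : ∀ p j r, 0 < A p j r) :
    (∀ (k : Fin P) (i j : Fin (N k)) (r s : Fin R),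
      ∑' X : ((p : Fin P) → Fin (N p)) → ℕ,
          pmfProd A X * -(pd (fun A' => pd (fun A'' => llik A'' X) k j s A') k i r A) =
        (if i = j then
          ∑ i' ∈ Finset.univ.filter (fun i' : (q : Fin P) → Fin (N q) => i' k = i),
            (1 / mTen A i') * ∏ q ∈ Finset.univ.erase k, A q (i' q) r * A q (i' q) s
        else 0)) ∧
    (∀ (k l : Fin P), k ≠ l → ∀ (i : Fin (N k)) (j : Fin (N l)) (r s : Fin R),
      ∑' X : ((p : Fin P) → Fin (N p)) → ℕ,
          pmfProd A X * -(pd (fun A' => pd (fun A'' => llik A'' X) l j s A') k i r A) =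
        A k i s * A l j r *
          ∑ i' ∈ Finset.univ.filter
              (fun i' : (q : Fin P) → Fin (N q) => i' k = i ∧ i' l = j),
            (1 / mTen A i') *
              ∏ q ∈ (Finset.univ.erase k).erase l, A q (i' q) r * A q (i' q) s) :=
  stmt_10_general P R hR N A hA
end
end

section
/- Suppose every mode-p marginal x_p(j) = Σ_{i : i_p = j} x_i is strictly positive. Let θ = (a_1,…,a_P) have strictly positive entries and suppose the gradient of the rank-one PCP loglikelihood vanishes at θ, i.e., x_p(j)/a_p(j) = ∏_{q≠p} λ_q for all p and j. Then the constraint λ_1 λ_2 ⋯ λ_P = Σ_i x_i holds, and the rank-one tensor determined by θ is uniquely given in closed form: for every multi-index i, ∏_{p=1}^P a_p(i_p) = (Σ_{i'} x_{i'})^{−(P−1)} ∏_{p=1}^P x_p(i_p). -/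
open Finset

noncomputable section

variable {P : ℕ} {N : Fin P → ℕ}

/-- Rank-one parameter tensor entry `m_i = ∏_p a_p(i_p)`. -/
def mOne (a : (p : Fin P) → Fin (N p) → ℝ) (i : (p : Fin P) → Fin (N p)) : ℝ :=
  ∏ p, a p (i p)

/-- Rank-one PCP loglikelihood `ℓ(X|θ) = Σ_i [ x_i log m_i − m_i − log(x_i!) ]`. -/
def llik1 (a : (p : Fin P) → Fin (N p) → ℝ) (X : ((p : Fin P) → Fin (N p)) → ℕ) : ℝ :=
  ∑ i : (p : Fin P) → Fin (N p),
    ((X i : ℝ) * Real.log (mOne a i) - mOne a i - Real.log (Nat.factorial (X i) : ℝ))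

/-- Mode-`p` marginal sum `x_p(j) = Σ_{i : i_p = j} x_i` (as a real number). -/
def xmarg (X : ((p : Fin P) → Fin (N p)) → ℕ) (p : Fin P) (j : Fin (N p)) : ℝ :=
  ∑ i ∈ Finset.univ.filter (fun i : (q : Fin P) → Fin (N q) => i p = j), (X i : ℝ)

/-- Factor sum `λ_p = Σ_j a_p(j)`. -/
def lam1 (a : (p : Fin P) → Fin (N p) → ℝ) (p : Fin P) : ℝ :=
  ∑ j, a p j

/-! Stationarity says `x_p(j) = a_p(j) ∏_{q≠p} λ_q`. Summing over `j` gives `Σ x = λ_p ∏_{q≠p} λ_q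
= ∏ λ`; taking the product over `p` instead, each `λ_q` occurs `P - 1` times, so
`∏_p x_p(i_p) = m_i (∏ λ)^(P-1) = m_i (Σ x)^(P-1)`. -/

theorem Finset.prod_prod_erase_eq_pow {ι M : Type*} [Fintype ι] [DecidableEq ι] [CommMonoid M]
    (f : ι → M) : ∏ p, ∏ q ∈ univ.erase p, f q = (∏ q, f q) ^ (Fintype.card ι - 1) := by
  calc ∏ p, ∏ q ∈ univ.erase p, f q
      = ∏ p, ∏ q, if q = p then 1 else f q := by
        refine prod_congr rfl fun p _ => ?_
        rw [prod_ite, filter_eq', if_pos (mem_univ p), prod_singleton, one_mul,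
          filter_ne']
    _ = ∏ q, ∏ p, if q = p then 1 else f q := prod_comm
    _ = ∏ q, f q ^ (Fintype.card ι - 1) := by
        refine prod_congr rfl fun q _ => ?_
        rw [prod_ite, filter_eq, if_pos (mem_univ q), prod_const_one, one_mul, filter_ne,
          prod_const, card_erase_of_mem (mem_univ q), card_univ]
    _ = (∏ q, f q) ^ (Fintype.card ι - 1) := prod_pow _ _ _

theorem sum_xmarg (X : ((p : Fin P) → Fin (N p)) → ℕ) (p : Fin P) :
    ∑ j, xmarg X p j = ∑ i : (p : Fin P) → Fin (N p), (X i : ℝ) := by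
  unfold xmarg
  exact sum_fiberwise univ (fun i => i p) (fun i => (X i : ℝ))

section RankOne

variable {a : (p : Fin P) → Fin (N p) → ℝ} {X : ((p : Fin P) → Fin (N p)) → ℕ}

theorem lam1_pos (ha : ∀ p j, 0 < a p j) {p : Fin P} (j : Fin (N p)) : 0 < lam1 a p :=
  (ha p j).trans_le (single_le_sum (fun k _ => (ha p k).le) (mem_univ j))

theorem prod_lam1_eq_sum_of_xmarg_eq
    (hmarg : ∀ p j, xmarg X p j = a p j * ∏ q ∈ univ.erase p, lam1 a q) (p : Fin P) :
    ∏ q, lam1 a q = ∑ i : (p : Fin P) → Fin (N p), (X i : ℝ) := by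
  rw [← sum_xmarg X p, ← mul_prod_erase univ (lam1 a) (mem_univ p), lam1, sum_mul]
  exact sum_congr rfl fun j _ => (hmarg p j).symm

theorem prod_xmarg_eq_mOne_mul_of_xmarg_eq
    (hmarg : ∀ p j, xmarg X p j = a p j * ∏ q ∈ univ.erase p, lam1 a q)
    (i : (p : Fin P) → Fin (N p)) :
    ∏ p, xmarg X p (i p) = mOne a i * (∏ q, lam1 a q) ^ (P - 1) := by
  rw [prod_congr rfl fun p _ => hmarg p (i p), prod_mul_distrib, prod_prod_erase_eq_pow,
    Fintype.card_fin, mOne]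

end RankOne

theorem stmt_14_general (P : ℕ) (hP : 2 ≤ P) (N : Fin P → ℕ)
    (a : (p : Fin P) → Fin (N p) → ℝ) (ha : ∀ p j, 0 < a p j)
    (X : ((p : Fin P) → Fin (N p)) → ℕ)
    (hgrad : ∀ (p : Fin P) (j : Fin (N p)),
      xmarg X p j / a p j = ∏ q ∈ Finset.univ.erase p, lam1 a q) :
    (∏ p, lam1 a p) = (∑ i : (p : Fin P) → Fin (N p), (X i : ℝ)) ∧
    ∀ i : (p : Fin P) → Fin (N p),
      mOne a i =
        ((∑ i' : (p : Fin P) → Fin (N p), (X i' : ℝ)) ^ (P - 1))⁻¹ *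
          ∏ p, xmarg X p (i p) := by
  have hmarg : ∀ p j, xmarg X p j = a p j * ∏ q ∈ univ.erase p, lam1 a q := fun p j => by
    rw [← hgrad p j, mul_div_cancel₀ _ (ha p j).ne']
  have htotal := prod_lam1_eq_sum_of_xmarg_eq hmarg ⟨0, by omega⟩
  refine ⟨htotal, fun i => ?_⟩
  have hL : 0 < ∏ q, lam1 a q := prod_pos fun q _ => lam1_pos ha (i q)
  rw [prod_xmarg_eq_mOne_mul_of_xmarg_eq hmarg i, ← htotal, mul_comm (mOne a i),
    inv_mul_cancel_left₀ (pow_pos hL _).ne']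

/-- **Closed-form rank-one maximum likelihood estimator.** Suppose every mode-`p`
marginal `x_p(j)` is strictly positive, `θ = (a_1,…,a_P)` has strictly positive
entries, and the gradient of the rank-one PCP loglikelihood vanishes at `θ`, i.e.
`x_p(j)/a_p(j) = ∏_{q≠p} λ_q` for all `p, j`. Then `λ_1 ⋯ λ_P = Σ_i x_i`, and the
rank-one tensor determined by `θ` is uniquely given in closed form:
`∏_p a_p(i_p) = (Σ_{i'} x_{i'})^{-(P-1)} ∏_p x_p(i_p)` for every multi-index `i`. -/
theorem stmt_14 (P : ℕ) (hP : 2 ≤ P) (N : Fin P → ℕ) (hN : ∀ p, 1 ≤ N p)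
    (a : (p : Fin P) → Fin (N p) → ℝ) (ha : ∀ p j, 0 < a p j)
    (X : ((p : Fin P) → Fin (N p)) → ℕ)
    (hX : ∀ (p : Fin P) (j : Fin (N p)), 0 < xmarg X p j)
    (hgrad : ∀ (p : Fin P) (j : Fin (N p)),
      xmarg X p j / a p j = ∏ q ∈ Finset.univ.erase p, lam1 a q) :
    (∏ p, lam1 a p) = (∑ i : (p : Fin P) → Fin (N p), (X i : ℝ)) ∧
    ∀ i : (p : Fin P) → Fin (N p),
      mOne a i =
        ((∑ i' : (p : Fin P) → Fin (N p), (X i' : ℝ)) ^ (P - 1))⁻¹ *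
          ∏ p, xmarg X p (i p) :=
  stmt_14_general P hP N a ha X hgrad
end
end
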